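/- arXiv:2605.03552 — 2 statements merged into one kernel-verified Lean document; each statement's English description precedes it below -/
import Mathlib

section
/- With U(m,j) = C(m-j,j)·2^j, for every t ≥ 1 the quantity D_t := Σ_{j=0}^{t-1} U(3t,j) − Σ_{j≥t+1} U(3t,j) equals the alternating sum Σ_{j=1}^{t} (-1)^(j-1)·C(2(t-j), t-j)·2^(t-j). -/
/-- U(m,j) = C(m-j,j)·2^j (automatically 0 when 2j > m). -/
def U (m j : ℕ) : ℕ := Nat.choose (m - j) j * 2 ^ j

def C (t : ℕ) : ℕ := Nat.choose (2 * t) t * 2 ^ t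

/-!
Write `σ(m, k) = ∑ⱼ sign(k - j) U(m, j)`, so that `D_t = σ(3t, t)`. Pascal's rule gives
`U(m+2, j+1) = U(m+1, j+1) + 2 U(m, j)`, hence `σ(m+2, k+1) = σ(m+1, k+1) + 2 σ(m, k)`, while moving
the cut gives `σ(m, k+1) = σ(m, k) + U(m, k) + U(m, k+1)`. Chasing these two rules from
`(3t, t)` and `(3t+1, t)` to `(3t+3, t+1)` and `(3t+4, t+1)`, with the symmetry and Pascal's rule
for binomial coefficients, gives by induction `2(σ(3t, t) + σ(3t+1, t)) = -U(3t+1, t+1)`, and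
then `D_{t+1} + D_t = U(3t, t) = C_t`. With `D_0 = 0` this recursion unfolds to the alternating sum.
-/

open Finset

theorem eq_sum_range_neg_one_pow_mul {R : Type*} [CommRing R] {f c : ℕ → R} (h₀ : f 0 = 0)
    (h : ∀ t, f (t + 1) + f t = c t) (t : ℕ) :
    f t = ∑ j ∈ range t, (-1) ^ j * c (t - 1 - j) := by
  induction t with
  | zero => simpa using h₀
  | succ t ih =>
    have shift : ∀ j, t + 1 - 1 - (j + 1) = t - 1 - j := fun j => by omega
    rw [sum_range_succ', eq_sub_of_add_eq (h t), ih]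
    simp only [shift, pow_succ, mul_neg_one, neg_mul, sum_neg_distrib]
    simp only [pow_zero, add_tsub_cancel_right, tsub_zero, one_mul]
    ring

theorem sum_range_sign_mul_eq_sub (f : ℕ → ℤ) {k m : ℕ} (hk : k ≤ m) :
    ∑ j ∈ range (m + 1), Int.sign (k - j) * f j
      = ∑ j ∈ range k, f j - ∑ j ∈ Icc (k + 1) m, f j := by
  have below : ∀ j ∈ range k, Int.sign (k - j) * f j = f j := fun j hj => by
    rw [Int.sign_eq_one_of_pos (by simp at hj; omega), one_mul]
  have above : ∀ j ∈ Icc (k + 1) m, Int.sign (k - j) * f j = -f j := fun j hj => by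
    rw [Int.sign_eq_neg_one_of_neg (by simp at hj; omega), neg_one_mul]
  rw [← sum_range_add_sum_Ico _ (by omega : k ≤ m + 1), sum_eq_sum_Ico_succ_bot (by omega),
    Ico_add_one_right_eq_Icc, sum_congr rfl below, sum_congr rfl above, sum_neg_distrib]
  simp [sub_eq_add_neg]

theorem Int.sign_add_one_sub_sign (x : ℤ) :
    Int.sign (x + 1) - Int.sign x = (if x = 0 then 1 else 0) + (if x = -1 then 1 else 0) := by
  obtain hx | rfl | rfl | hx : x < -1 ∨ x = -1 ∨ x = 0 ∨ 0 < x := by omega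
  · rw [Int.sign_eq_neg_one_of_neg (by omega), Int.sign_eq_neg_one_of_neg (by omega),
      if_neg (by omega), if_neg (by omega)]
    rfl
  · rfl
  · rfl
  · rw [Int.sign_eq_one_of_pos (by omega), Int.sign_eq_one_of_pos hx,
      if_neg (by omega), if_neg (by omega)]
    rfl

theorem U_eq_zero_of_lt {m j : ℕ} (h : m < 2 * j) : U m j = 0 := by
  rw [U, Nat.choose_eq_zero_of_lt (by omega), zero_mul]

theorem U_of_eq_add {m n j : ℕ} (h : m = n + j) : U m j = n.choose j * 2 ^ j := by
  rw [U, h, Nat.add_sub_cancel]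

theorem U_zero_right (m : ℕ) : U m 0 = 1 := by
  simp [U]

theorem U_three_mul_self (t : ℕ) : U (3 * t) t = C t := by
  rw [U_of_eq_add (show 3 * t = 2 * t + t by ring), C]

theorem U_add_two_add_one (m j : ℕ) : U (m + 2) (j + 1) = U (m + 1) (j + 1) + 2 * U m j := by
  rcases le_or_gt j m with h | h
  · obtain ⟨n, rfl⟩ := Nat.exists_eq_add_of_le' h
    rw [U_of_eq_add (show n + j + 2 = (n + 1) + (j + 1) by ring),
      U_of_eq_add (show n + j + 1 = n + (j + 1) by ring), U_of_eq_add rfl, Nat.choose_succ_succ']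
    ring
  · rw [U_eq_zero_of_lt (by omega), U_eq_zero_of_lt (by omega), U_eq_zero_of_lt (by omega)]

theorem two_mul_U_three_mul_add (t : ℕ) :
    2 * U (3 * t) t + U (3 * t + 1) (t + 1) = 2 * U (3 * t + 1) t := by
  rw [U_of_eq_add (show 3 * t = 2 * t + t by ring),
    U_of_eq_add (show 3 * t + 1 = 2 * t + (t + 1) by ring),
    U_of_eq_add (show 3 * t + 1 = (2 * t + 1) + t by ring), ← Nat.choose_symm_half,
    Nat.choose_succ_succ']
  ring

theorem U_three_mul_add_four (t : ℕ) :
    U (3 * t + 4) (t + 2) + 8 * U (3 * t + 1) t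
      = 4 * U (3 * t + 2) t + 4 * U (3 * t + 2) (t + 1) := by
  rw [U_of_eq_add (show 3 * t + 4 = (2 * t + 2) + (t + 2) by ring),
    U_of_eq_add (show 3 * t + 1 = (2 * t + 1) + t by ring),
    U_of_eq_add (show 3 * t + 2 = (2 * t + 2) + t by ring),
    U_of_eq_add (show 3 * t + 2 = (2 * t + 1) + (t + 1) by ring), Nat.choose_symm_half,
    Nat.choose_symm_of_eq_add (show 2 * t + 2 = t + (t + 2) by ring)]
  ring

def signedSum (m k : ℕ) : ℤ := ∑ j ∈ range (m + 1), Int.sign (k - j) * U m j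

theorem signedSum_eq_sum_range {m k N : ℕ} (hN : m < N) :
    signedSum m k = ∑ j ∈ range N, Int.sign (k - j) * U m j := by
  refine sum_subset (range_subset_range.2 (by omega)) fun j _ hj => ?_
  rw [U_eq_zero_of_lt (by simp at hj; omega), Nat.cast_zero, mul_zero]

theorem signedSum_add_two_add_one (m k : ℕ) :
    signedSum (m + 2) (k + 1) = signedSum (m + 1) (k + 1) + 2 * signedSum m k := by
  have pascal : ∀ j, (U (m + 2) (j + 1) : ℤ) = U (m + 1) (j + 1) + 2 * U m j := fun j => by
    exact_mod_cast U_add_two_add_one m j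
  rw [signedSum_eq_sum_range (by omega : m < m + 2), signedSum,
    signedSum_eq_sum_range (by omega : m + 1 < m + 3), sum_range_succ' _ (m + 2),
    sum_range_succ' _ (m + 2)]
  simp only [pascal, Nat.cast_add, Nat.cast_one, add_sub_add_right_eq_sub, mul_add, sum_add_distrib,
    mul_sum, U_zero_right, mul_left_comm _ (2 : ℤ)]
  ring

theorem signedSum_add_one (m k : ℕ) :
    signedSum m (k + 1) = signedSum m k + U m k + U m (k + 1) := by
  have jump : ∀ j : ℕ, Int.sign ((k + 1 : ℕ) - j) * (U m j : ℤ) - Int.sign (k - j) * U m j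
      = (if k = j then (U m j : ℤ) else 0) + (if k + 1 = j then (U m j : ℤ) else 0) := fun j => by
    rw [← sub_mul, Nat.cast_add, Nat.cast_one, add_sub_right_comm, Int.sign_add_one_sub_sign]
    split_ifs <;> omega
  have boundary : ∀ i, (if i ∈ range (m + 1) then (U m i : ℤ) else 0) = U m i := fun i => by
    split_ifs with hi
    · rfl
    · rw [U_eq_zero_of_lt (by simp at hi; omega), Nat.cast_zero]
  rw [add_assoc, ← sub_eq_iff_eq_add', signedSum, signedSum, ← sum_sub_distrib]
  simp only [jump, sum_add_distrib, sum_ite_eq, boundary]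

theorem two_mul_signedSum_three_mul_add (t : ℕ) :
    2 * (signedSum (3 * t) t + signedSum (3 * t + 1) t) = -U (3 * t + 1) (t + 1) := by
  induction t with
  | zero => simp [signedSum, U, sum_range_succ]
  | succ t ih =>
    have diag₁ := signedSum_add_two_add_one (3 * t) t
    have diag₂ : signedSum (3 * t + 3) (t + 1)
        = signedSum (3 * t + 2) (t + 1) + 2 * signedSum (3 * t + 1) t :=
      signedSum_add_two_add_one _ _
    have diag₃ : signedSum (3 * t + 4) (t + 1)
        = signedSum (3 * t + 3) (t + 1) + 2 * signedSum (3 * t + 2) t :=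
      signedSum_add_two_add_one _ _
    have cut₁ := signedSum_add_one (3 * t + 1) t
    have cut₂ := signedSum_add_one (3 * t + 2) t
    have binom : (U (3 * t + 4) (t + 2) : ℤ) + 8 * U (3 * t + 1) t
        = 4 * U (3 * t + 2) t + 4 * U (3 * t + 2) (t + 1) := by
      exact_mod_cast U_three_mul_add_four t
    rw [show 3 * (t + 1) = 3 * t + 3 by ring, show t + 1 + 1 = t + 2 by ring]
    linear_combination 8 * diag₁ + 4 * diag₂ + 2 * diag₃ + 8 * cut₁ - 4 * cut₂ + 8 * ih + binom

theorem signedSum_three_mul_succ_add (t : ℕ) :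
    signedSum (3 * (t + 1)) (t + 1) + signedSum (3 * t) t = U (3 * t) t := by
  have diag₁ := signedSum_add_two_add_one (3 * t) t
  have diag₂ : signedSum (3 * t + 3) (t + 1)
      = signedSum (3 * t + 2) (t + 1) + 2 * signedSum (3 * t + 1) t :=
    signedSum_add_two_add_one _ _
  have cut₁ := signedSum_add_one (3 * t + 1) t
  have neighbours := two_mul_signedSum_three_mul_add t
  have binom : 2 * (U (3 * t) t : ℤ) + U (3 * t + 1) (t + 1) = 2 * U (3 * t + 1) t := by
    exact_mod_cast two_mul_U_three_mul_add t
  rw [show 3 * (t + 1) = 3 * t + 3 by ring]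
  refine mul_left_cancel₀ (two_ne_zero (α := ℤ)) ?_
  linear_combination 2 * diag₁ + 2 * diag₂ + 2 * cut₁ + 3 * neighbours - binom

theorem stmt13_general (t : ℕ) :
    ((∑ j ∈ Finset.range t, U (3 * t) j : ℤ)
        - ∑ j ∈ Finset.Icc (t + 1) (3 * t), (U (3 * t) j : ℤ))
      = ∑ j ∈ Finset.range t, (-1) ^ j * (C (t - 1 - j) : ℤ) := by
  rw [← sum_range_sign_mul_eq_sub _ (by omega : t ≤ 3 * t)]
  exact eq_sum_range_neg_one_pow_mul (f := fun t => signedSum (3 * t) t) (by simp [signedSum])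
    (fun t => by simpa only [U_three_mul_self] using signedSum_three_mul_succ_add t) t

theorem stmt13 (t : ℕ) (ht : 1 ≤ t) :
    ((∑ j ∈ Finset.range t, U (3 * t) j : ℤ)
        - ∑ j ∈ Finset.Icc (t + 1) (3 * t), (U (3 * t) j : ℤ))
      = ∑ j ∈ Finset.range t, (-1) ^ j * (C (t - 1 - j) : ℤ) :=
  stmt13_general t
end

section
/- For integers x ≥ y+2 ≥ 2 and 0 ≤ r < ⌊y/2⌋, the quantity (x+y-r)(x-r-1)(x+r+1)(x+y+r+2) − 4(y-2r)(y-2r-1)(y+2r+3)(y+2r+4) is strictly positive; equivalently, with x = y+2 one has (2y+2-r)(y-r+1)(y+r+3)(2y+r+4) > 4(y-2r)(y-2r-1)(y+2r+3)(y+2r+4), using the two polynomial identities (y-r+1)(y+r+3) − (y-2r)(y+2r+4) = 3(r+1)² and (2y+2-r)(2y+r+4) − 4(y-2r-1)(y+2r+3) = 15r² + 30r + 4y + 20. -/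
theorem stmt17 (x y r : ℤ) (hy : 0 ≤ y) (hx : y + 2 ≤ x)
    (hr0 : 0 ≤ r) (hr : 2 * r + 2 ≤ y) :
    0 < (x + y - r) * (x - r - 1) * (x + r + 1) * (x + y + r + 2)
        - 4 * (y - 2 * r) * (y - 2 * r - 1) * (y + 2 * r + 3) * (y + 2 * r + 4) ∧
    4 * (y - 2 * r) * (y - 2 * r - 1) * (y + 2 * r + 3) * (y + 2 * r + 4)
      < (2 * y + 2 - r) * (y - r + 1) * (y + r + 3) * (2 * y + r + 4) ∧
    (y - r + 1) * (y + r + 3) - (y - 2 * r) * (y + 2 * r + 4) = 3 * (r + 1) ^ 2 ∧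
    (2 * y + 2 - r) * (2 * y + r + 4) - 4 * (y - 2 * r - 1) * (y + 2 * r + 3)
      = 15 * r ^ 2 + 30 * r + 4 * y + 20 := by
  have hA : (0:ℤ) ≤ (y - 2*r) * (y + 2*r + 4) :=
    mul_nonneg (by linarith) (by linarith)
  have hB : (0:ℤ) ≤ (y - 2*r - 1) * (y + 2*r + 3) :=
    mul_nonneg (by linarith) (by linarith)
  have hS : (0:ℤ) < 15 * r ^ 2 + 30 * r + 4 * y + 20 := by positivity
  have h2 : 4 * (y - 2 * r) * (y - 2 * r - 1) * (y + 2 * r + 3) * (y + 2 * r + 4)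
      < (2 * y + 2 - r) * (y - r + 1) * (y + r + 3) * (2 * y + r + 4) := by
    nlinarith [mul_nonneg hA hS.le, mul_nonneg (sq_nonneg (r+1)) hB,
      mul_pos (by positivity : (0:ℤ) < ((r:ℤ)+1)^2) hS]
  refine ⟨?_, h2, by ring, by ring⟩
  have key : (2 * y + 2 - r) * (y - r + 1) * (y + r + 3) * (2 * y + r + 4)
      ≤ (x + y - r) * (x - r - 1) * (x + r + 1) * (x + y + r + 2) := by
    have p1 : (0:ℤ) ≤ 2 * y + 2 - r := by linarith
    have p2 : (0:ℤ) ≤ y - r + 1 := by linarith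
    have p3 : (0:ℤ) ≤ y + r + 3 := by linarith
    have q1 : (0:ℤ) ≤ x + y - r := by linarith
    have q2 : (0:ℤ) ≤ x - r - 1 := by linarith
    have q3 : (0:ℤ) ≤ x + r + 1 := by linarith
    exact mul_le_mul (mul_le_mul (mul_le_mul (by linarith) (by linarith) p2 q1)
      (by linarith) p3 (mul_nonneg q1 q2)) (by linarith) (by linarith)
      (mul_nonneg (mul_nonneg q1 q2) q3)
  linarith
end
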